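/- Let K be an H-graded field and G a finite group of graded automorphisms of K with inertia subgroup I (elements acting trivially on K₁). Set F = K^I and L = K^G. Then K₁/L₁ is a finite Galois extension of fields with Galois group G/I, F₁ = K₁, and the natural map K₁ ⊗_{L₁} L → F is an isomorphism of graded L-algebras; in particular [F:L] = [K₁:L₁] = #(G/I) and e_{F/L} = 1. -/

import Mathlib

open scoped DirectSum

/-- An `H`-graded field: a nonzero commutative ring with an internal grading by the
commutative group `H` in which every nonzero homogeneous element is invertible
(with homogeneous inverse). -/
structure GradedField (H : Type*) [CommGroup H] [DecidableEq H] (K : Type*) [CommRing K] where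
  comp : H → AddSubgroup K
  one_mem : (1 : K) ∈ comp 1
  mul_mem : ∀ {g h : H} {x y : K}, x ∈ comp g → y ∈ comp h → x * y ∈ comp (g * h)
  isInternal : DirectSum.IsInternal fun h : H => comp h
  zero_ne_one : (0 : K) ≠ 1
  inv_mem : ∀ {h : H} {x : K}, x ∈ comp h → x ≠ 0 → ∃ y ∈ comp h⁻¹, x * y = 1

namespace GradedField

variable {H : Type*} [CommGroup H] [DecidableEq H] {K : Type*} [CommRing K] (F : GradedField H K)

/-- A homogeneous element. -/
def Homogeneous (x : K) : Prop := ∃ h, x ∈ F.comp h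

/-- A subring is graded if each of its elements is a sum of homogeneous elements of the
subring. -/
def IsGradedSubring (R : Subring K) : Prop :=
  ∀ x ∈ R, x ∈ AddSubgroup.closure {y : K | y ∈ R ∧ F.Homogeneous y}

/-- A graded subfield: a graded subring closed under inverses of nonzero homogeneous
elements. -/
structure IsGradedSubfield (L : Subring K) : Prop where
  graded : F.IsGradedSubring L
  inv_mem : ∀ x ∈ L, F.Homogeneous x → x ≠ 0 → Ring.inverse x ∈ L

/-- A graded valuation ring of the graded subfield `L`: a graded subring `R ⊆ L` such that
every nonzero homogeneous element of `L` lies in `R` or has its inverse in `R`. -/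
def IsGradedValRing (L R : Subring K) : Prop :=
  R ≤ L ∧ F.IsGradedSubring R ∧
    ∀ x ∈ L, F.Homogeneous x → x ≠ 0 → (x ∈ R ∨ Ring.inverse x ∈ R)

/-- The identity component `K₁`, as a subring. -/
def oneComponent : Subring K where
  carrier := F.comp 1
  one_mem' := F.one_mem
  mul_mem' := fun ha hb => by simpa using F.mul_mem ha hb
  add_mem' := fun ha hb => (F.comp 1).add_mem ha hb
  zero_mem' := (F.comp 1).zero_mem
  neg_mem' := fun ha => (F.comp 1).neg_mem ha

theorem mem_oneComponent {x : K} : x ∈ F.oneComponent ↔ x ∈ F.comp 1 := Iff.rfl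

/-- The value group `ρ(L^×) ⊆ H` of a graded subfield `L`. -/
def valueGroup (L : Subring K)
    (hL : ∀ x ∈ L, F.Homogeneous x → x ≠ 0 → Ring.inverse x ∈ L) : Subgroup H where
  carrier := {h | ∃ x ∈ F.comp h, x ≠ 0 ∧ x ∈ L}
  one_mem' := ⟨1, F.one_mem, Ne.symm F.zero_ne_one, L.one_mem⟩
  mul_mem' := by
    rintro g h ⟨x, hx, hx0, hxL⟩ ⟨y, hy, hy0, hyL⟩
    obtain ⟨x', hx', hxx'⟩ := F.inv_mem hx hx0
    obtain ⟨y', hy', hyy'⟩ := F.inv_mem hy hy0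
    refine ⟨x * y, F.mul_mem hx hy, ?_, L.mul_mem hxL hyL⟩
    intro h0
    have h1 : x * y * (x' * y') = 1 := by rw [mul_mul_mul_comm, hxx', hyy', one_mul]
    rw [h0, zero_mul] at h1
    exact F.zero_ne_one h1
  inv_mem' := by
    rintro g ⟨x, hx, hx0, hxL⟩
    obtain ⟨y, hy, hxy⟩ := F.inv_mem hx hx0
    have hu : IsUnit x := IsUnit.of_mul_eq_one y hxy
    have hyx : Ring.inverse x = y := by
      calc Ring.inverse x = Ring.inverse x * (x * y) := by rw [hxy, mul_one]
        _ = Ring.inverse x * x * y := by ring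
        _ = y := by rw [Ring.inverse_mul_cancel x hu, one_mul]
    refine ⟨y, hy, ?_, ?_⟩
    · intro h0; rw [h0, mul_zero] at hxy; exact F.zero_ne_one hxy
    · rw [← hyx]; exact hL x hxL ⟨g, hx⟩ hx0

/-- The value group `ρ(K^×)` of the whole graded field. -/
def fullValueGroup : Subgroup H :=
  F.valueGroup ⊤ (fun _ _ _ _ => Subring.mem_top _)

/-- `K₁` as a module over `L₁ = K₁ ∩ L`. -/
def oneSubmodule (L : Subring K) : Submodule ↥(F.oneComponent ⊓ L) K where
  carrier := F.comp 1
  add_mem' := fun ha hb => (F.comp 1).add_mem ha hb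
  zero_mem' := (F.comp 1).zero_mem
  smul_mem' := fun c x hx => by
    have hc : (c : K) ∈ F.comp 1 := ((Subring.mem_inf).mp c.2).1
    have := F.mul_mem hc hx
    simpa [Subring.smul_def] using this

/-- A graded automorphism: a ring automorphism preserving each graded component. -/
def IsGradedAut (σ : RingAut K) : Prop := ∀ (h : H) (x : K), x ∈ F.comp h → σ x ∈ F.comp h

end GradedField

/-- The fixed subring `K^G` of a group of ring automorphisms. -/
def fixedSubring {K : Type*} [CommRing K] (G : Subgroup (RingAut K)) : Subring K where
  carrier := {x | ∀ σ ∈ G, σ x = x}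
  one_mem' := fun σ _ => map_one σ
  mul_mem' := fun ha hb σ hσ => by rw [map_mul, ha σ hσ, hb σ hσ]
  add_mem' := fun ha hb σ hσ => by rw [map_add, ha σ hσ, hb σ hσ]
  zero_mem' := fun σ _ => map_zero σ
  neg_mem' := fun ha σ hσ => by rw [map_neg, ha σ hσ]

theorem mem_fixedSubring {K : Type*} [CommRing K] {G : Subgroup (RingAut K)} {x : K} :
    x ∈ fixedSubring G ↔ ∀ σ ∈ G, σ x = x := Iff.rfl


namespace GradedField

variable {H : Type*} [CommGroup H] [DecidableEq H] {K : Type*} [CommRing K]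
variable (F : GradedField H K)

/-- Decomposition of an element into its homogeneous components. -/
noncomputable def decompose (x : K) : ⨁ h : H, ↥(F.comp h) :=
  (Equiv.ofBijective _ F.isInternal).symm x

/-- The degree-`h` homogeneous component of `x`. -/
noncomputable def component (h : H) (x : K) : K := (F.decompose x h : K)

/-- The inertia subgroup of `G`: graded automorphisms in `G` acting trivially on `K₁`. -/
def inertia (G : Subgroup (RingAut K)) : Subgroup (RingAut K) where
  carrier := {σ | σ ∈ G ∧ ∀ x ∈ F.comp 1, σ x = x}
  one_mem' := ⟨G.one_mem, fun _ _ => rfl⟩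
  mul_mem' := fun {a b} ha hb => ⟨G.mul_mem ha.1 hb.1, fun x hx => by
    show a (b x) = x
    rw [hb.2 x hx, ha.2 x hx]⟩
  inv_mem' := fun {a} ha => ⟨G.inv_mem ha.1, fun x hx => by
    conv_lhs => rw [← ha.2 x hx]
    exact a.symm_apply_apply x⟩

theorem mem_inertia {G : Subgroup (RingAut K)} {σ : RingAut K} :
    σ ∈ F.inertia G ↔ σ ∈ G ∧ ∀ x ∈ F.comp 1, σ x = x := Iff.rfl

end GradedField

/-- A subring `S` containing a subring `L`, viewed as an `L`-submodule of the ambient ring. -/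
def Subring.toSubmoduleOver {K : Type*} [CommRing K] (L S : Subring K) (hLS : L ≤ S) :
    Submodule ↥L K where
  carrier := S
  add_mem' := fun ha hb => S.add_mem ha hb
  zero_mem' := S.zero_mem
  smul_mem' := fun c x hx => S.mul_mem (hLS c.2) hx

section ZR

variable {H : Type*} [CommGroup H] [DecidableEq H] {K : Type*} [CommRing K]

/-- The Zariski–Riemann space of graded valuation rings of `K` containing `k₀`. -/
def GradedField.ZR (F : GradedField H K) (k₀ : Subring K) : Type _ :=
  {O : Subring K // F.IsGradedValRing ⊤ O ∧ k₀ ≤ O}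

/-- The set of homogeneous units (nonzero homogeneous elements) of `K`. -/
def GradedField.HomogUnits (F : GradedField H K) : Type _ :=
  {x : K // x ≠ 0 ∧ F.Homogeneous x}

open Classical in
/-- The embedding of the Zariski–Riemann space into `{0,1}^{K^×}` via characteristic
functions. -/
noncomputable def GradedField.chi (F : GradedField H K) (k₀ : Subring K) (O : F.ZR k₀) :
    F.HomogUnits → Bool :=
  fun x => decide (x.1 ∈ O.1)

/-- Basic open sets `P{F}∖{G}` of the constructible topology, for finite sets `F`, `G` of
homogeneous units. -/
def GradedField.constructibleBasis (F : GradedField H K) (k₀ : Subring K) :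
    Set (Set (F.ZR k₀)) :=
  {s | ∃ Fs Gs : Finset K, (∀ a ∈ Fs, a ≠ 0 ∧ F.Homogeneous a) ∧
    (∀ b ∈ Gs, b ≠ 0 ∧ F.Homogeneous b) ∧
    s = {O : F.ZR k₀ | (∀ a ∈ Fs, a ∈ O.1) ∧ ∀ b ∈ Gs, b ∉ O.1}}

/-- The constructible topology on the Zariski–Riemann space. -/
def GradedField.constructibleTop (F : GradedField H K) (k₀ : Subring K) :
    TopologicalSpace (F.ZR k₀) :=
  TopologicalSpace.generateFrom (F.constructibleBasis k₀)


/-!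
Restriction to `K₁` embeds `G/I` into `Aut K₁` with fixed field `L₁`, so Artin's lemma gives
`[K₁ : L₁] = #(G/I)`. The heart of the matter is `e = 1`: if `0 ≠ x ∈ K_h` is fixed by `I`, the
relative traces `∑_{gI ∈ G/I} g (x a)`, `a ∈ K₁`, are `G`-fixed elements of `K_h`, and they cannot
all vanish by Dedekind's independence of the characters `G/I ↪ Aut K₁`. Hence every homogeneous
element of `K^I` is an element of `K₁` times a homogeneous element of `L = K^G`, and comparing
homogeneous components shows that an `L₁`-basis of `K₁` is an `L`-basis of `K^I`.
-/

namespace DirectSum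

variable {ι M σ : Type*} [DecidableEq ι] [AddCommMonoid M] [SetLike σ M] [AddSubmonoidClass σ M]
  (ℳ : ι → σ) [Decomposition ℳ]

theorem decompose_apply_map (f : M →+ M) (hf : ∀ i, ∀ x ∈ ℳ i, f x ∈ ℳ i) (x : M) (i : ι) :
    (decompose ℳ (f x) i : M) = f (decompose ℳ x i) := by
  induction x using Decomposition.inductionOn ℳ with
  | zero => simp
  | @homogeneous j m =>
    obtain rfl | hji := eq_or_ne j i
    · rw [decompose_of_mem_same ℳ m.2, decompose_of_mem_same ℳ (hf _ _ m.2)]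
    · rw [decompose_of_mem_ne ℳ m.2 hji, decompose_of_mem_ne ℳ (hf _ _ m.2) hji, map_zero]
  | add x y hx hy => simp [hx, hy]

end DirectSum

section CosetSum

variable {Γ M : Type*} [Group Γ] [AddCommMonoid M] [DistribMulAction Γ M] {N : Subgroup Γ} {y : M}

theorem smul_eq_smul_of_mk_eq (hy : ∀ n ∈ N, n • y = y) {a b : Γ}
    (hab : (a : Γ ⧸ N) = b) : a • y = b • y := by
  rw [← mul_inv_cancel_left a b, mul_smul, hy _ (QuotientGroup.eq.mp hab)]

theorem smul_sum_out_smul (hy : ∀ n ∈ N, n • y = y) [Fintype (Γ ⧸ N)] (g : Γ) :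
    g • ∑ q : Γ ⧸ N, q.out • y = ∑ q : Γ ⧸ N, q.out • y := by
  rw [Finset.smul_sum]
  refine Fintype.sum_equiv (MulAction.toPerm g) _ _ fun q => ?_
  rw [← mul_smul]
  refine smul_eq_smul_of_mk_eq hy ?_
  rw [QuotientGroup.out_eq', ← smul_eq_mul, MulAction.Quotient.mk_smul_out]
  rfl

end CosetSum

theorem RingAut.eq_zero_of_forall_sum_mul_apply_eq_zero {k ι : Type*} [CommRing k] [IsDomain k]
    [Fintype ι] {f : ι → RingAut k} (hf : Function.Injective f) {d : ι → k}
    (h : ∀ a, ∑ i, d i * f i a = 0) : d = 0 := by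
  have hinj : Function.Injective fun i => ((f i : k ≃* k) : k →* k) :=
    fun i j hij => hf (RingEquiv.ext fun a => DFunLike.congr_fun hij a)
  have := (linearIndependent_monoidHom k k).comp _ hinj
  exact funext (Fintype.linearIndependent_iff.mp this d (funext fun a => by simpa using h a))

theorem mem_fixedSubring_of_mul_eq_one {G : Subgroup (RingAut K)} {x y : K}
    (hx : x ∈ fixedSubring G) (hxy : x * y = 1) : y ∈ fixedSubring G := fun σ hσ =>
  (IsUnit.of_mul_eq_one y hxy).mul_left_cancel <| by
    rw [hxy, ← hx σ hσ, ← map_mul, hxy, map_one]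

theorem fixedSubring_anti {G₁ G₂ : Subgroup (RingAut K)} (h : G₁ ≤ G₂) :
    fixedSubring G₂ ≤ fixedSubring G₁ :=
  fun _ hx σ hσ => hx σ (h hσ)

def Subgroup.restrictRingAut (G : Subgroup (RingAut K)) (S : Subring K)
    (hS : ∀ σ ∈ G, ∀ x ∈ S, σ x ∈ S) : ↥G →* RingAut ↥S where
  toFun σ :=
    { toFun := fun a => ⟨σ.1 (a : K), hS σ.1 σ.2 a a.2⟩
      invFun := fun a => ⟨σ.1⁻¹ (a : K), hS σ.1⁻¹ (G.inv_mem σ.2) a a.2⟩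
      left_inv := fun a => Subtype.ext (σ.1.symm_apply_apply (a : K))
      right_inv := fun a => Subtype.ext (σ.1.apply_symm_apply (a : K))
      map_mul' := fun a b => Subtype.ext (map_mul σ.1 (a : K) b)
      map_add' := fun a b => Subtype.ext (map_add σ.1 (a : K) b) }
  map_one' := rfl
  map_mul' _ _ := rfl

@[simp]
theorem Subgroup.coe_restrictRingAut_apply (G : Subgroup (RingAut K)) (S : Subring K)
    (hS : ∀ σ ∈ G, ∀ x ∈ S, σ x ∈ S) (σ : ↥G) (a : ↥S) :
    (G.restrictRingAut S hS σ a : K) = (σ : RingAut K) a :=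
  rfl

namespace GradedField

variable (F : GradedField H K)

noncomputable instance : DirectSum.Decomposition F.comp := F.isInternal.chooseDecomposition

theorem mul_mem_comp_one {h : H} {x y : K} (hx : x ∈ F.comp h) (hy : y ∈ F.comp h⁻¹) :
    x * y ∈ F.comp 1 := by
  simpa using F.mul_mem hx hy

theorem decompose_map_of_isGradedAut {σ : RingAut K} (hσ : F.IsGradedAut σ) (x : K) (h : H) :
    (DirectSum.decompose F.comp (σ x) h : K) = σ (DirectSum.decompose F.comp x h) :=
  DirectSum.decompose_apply_map F.comp (σ : K →+ K) hσ x h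

theorem decompose_mul_of_mem_one {b : K} (hb : b ∈ F.comp 1) (x : K) (h : H) :
    (DirectSum.decompose F.comp (x * b) h : K) = DirectSum.decompose F.comp x h * b :=
  DirectSum.decompose_apply_map F.comp (AddMonoidHom.mulRight b)
    (fun _ _ hy => by simpa using F.mul_mem hy hb) x h

theorem eq_zero_of_forall_decompose_eq_zero {x : K}
    (hx : ∀ h, (DirectSum.decompose F.comp x h : K) = 0) : x = 0 := by
  classical
  rw [← DirectSum.sum_support_decompose F.comp x]
  exact Finset.sum_eq_zero fun h _ => hx h

theorem isHomogeneous_fixedSubring {G : Subgroup (RingAut K)} (hG : ∀ σ ∈ G, F.IsGradedAut σ) :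
    DirectSum.SetLike.IsHomogeneous F.comp (fixedSubring G) := fun h x hx σ hσ => by
  rw [← F.decompose_map_of_isGradedAut (hG σ hσ), hx σ hσ]

theorem isField_oneComponent : IsField ↥F.oneComponent where
  exists_pair_ne := ⟨0, 1, fun e => F.zero_ne_one (congrArg Subtype.val e)⟩
  mul_comm := mul_comm
  mul_inv_cancel {a} ha := by
    obtain ⟨y, hy, hxy⟩ := F.inv_mem a.2 (fun e => ha (Subtype.ext e))
    exact ⟨⟨y, by simpa [mem_oneComponent] using hy⟩, Subtype.ext hxy⟩

theorem isField_oneComponent_inf {A : Subring K}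
    (hA : ∀ {x y : K}, x ∈ A → x * y = 1 → y ∈ A) : IsField ↥(F.oneComponent ⊓ A) where
  exists_pair_ne := ⟨0, 1, fun e => F.zero_ne_one (congrArg Subtype.val e)⟩
  mul_comm := mul_comm
  mul_inv_cancel {a} ha := by
    obtain ⟨ha1, haA⟩ := Subring.mem_inf.mp a.2
    obtain ⟨y, hy, hxy⟩ := F.inv_mem ha1 (fun e => ha (Subtype.ext e))
    exact ⟨⟨y, Subring.mem_inf.mpr ⟨by simpa [mem_oneComponent] using hy, hA haA hxy⟩⟩,
      Subtype.ext hxy⟩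

section Descent

variable {A B : Subring K}

theorem exists_eq_mul_of_mem_comp
    (he : ∀ {h x}, x ∈ F.comp h → x ≠ 0 → x ∈ B → ∃ y ∈ F.comp h, y ≠ 0 ∧ y ∈ A)
    {h : H} {x : K} (hx : x ∈ F.comp h) (hxB : x ∈ B) :
    ∃ a ∈ F.comp 1, ∃ y ∈ A, x = a * y := by
  obtain rfl | hx0 := eq_or_ne x 0
  · exact ⟨0, (F.comp 1).zero_mem, 0, A.zero_mem, (mul_zero 0).symm⟩
  obtain ⟨y, hy, hy0, hyA⟩ := he hx hx0 hxB
  obtain ⟨u, hu, hyu⟩ := F.inv_mem hy hy0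
  exact ⟨x * u, F.mul_mem_comp_one hx hu, y, hyA, by rw [mul_assoc, mul_comm u, hyu, mul_one]⟩

theorem mem_closure_oneComponent_union (hBh : DirectSum.SetLike.IsHomogeneous F.comp B)
    (he : ∀ {h x}, x ∈ F.comp h → x ≠ 0 → x ∈ B → ∃ y ∈ F.comp h, y ≠ 0 ∧ y ∈ A)
    {x : K} (hx : x ∈ B) : x ∈ Subring.closure ((F.oneComponent : Set K) ∪ A) := by
  classical
  rw [← DirectSum.sum_support_decompose F.comp x]
  refine Subring.sum_mem _ fun h _ => ?_
  obtain ⟨a, ha, y, hy, hxay⟩ := F.exists_eq_mul_of_mem_comp he (SetLike.coe_mem _) (hBh h hx)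
  rw [hxay]
  exact Subring.mul_mem _ (Subring.subset_closure (Or.inl ha)) (Subring.subset_closure (Or.inr hy))

theorem eq_zero_of_sum_mul_eq_zero_of_mem_comp (hA : ∀ {x y : K}, x ∈ A → x * y = 1 → y ∈ A)
    {ι : Type*} {v : ι → K} (hv : LinearIndependent ↥(F.oneComponent ⊓ A) v) {t : Finset ι}
    {h : H} {c : ι → K} (hcA : ∀ i, c i ∈ A) (hc : ∀ i, c i ∈ F.comp h)
    (hsum : ∑ i ∈ t, c i * v i = 0) : ∀ i ∈ t, c i = 0 := by
  by_contra! ⟨j, hj, hcj⟩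
  obtain ⟨u, hu, hcju⟩ := F.inv_mem (hc j) hcj
  let d : ι → ↥(F.oneComponent ⊓ A) := fun i =>
    ⟨c i * u, Subring.mem_inf.mpr
      ⟨F.mul_mem_comp_one (hc i) hu, A.mul_mem (hcA i) (hA (hcA j) hcju)⟩⟩
  have hd : ∑ i ∈ t, d i • v i = 0 := by
    simp only [Subring.smul_def, smul_eq_mul, d, mul_right_comm _ u, ← Finset.sum_mul, hsum,
      zero_mul]
  have := congrArg Subtype.val (linearIndependent_iff'.mp hv t d hd j hj)
  exact F.zero_ne_one (this.symm.trans hcju)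

theorem linearIndependent_of_oneComponent_inf (hAh : DirectSum.SetLike.IsHomogeneous F.comp A)
    (hA : ∀ {x y : K}, x ∈ A → x * y = 1 → y ∈ A) {ι : Type*} {v : ι → K}
    (hv1 : ∀ i, v i ∈ F.comp 1) (hv : LinearIndependent ↥(F.oneComponent ⊓ A) v) :
    LinearIndependent ↥A v := by
  rw [linearIndependent_iff']
  intro t g hg i hi
  refine Subtype.ext (F.eq_zero_of_forall_decompose_eq_zero fun h => ?_)
  refine F.eq_zero_of_sum_mul_eq_zero_of_mem_comp hA hv (fun j => hAh h (g j).2)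
    (fun j => SetLike.coe_mem _) ?_ i hi
  have := congrArg (fun x => (DirectSum.decompose F.comp x h : K)) hg
  simpa [Subring.smul_def, F.decompose_mul_of_mem_one (hv1 _)] using this

theorem span_eq_toSubmoduleOver (hAB : A ≤ B) (hB1 : F.oneComponent ≤ B)
    (hBh : DirectSum.SetLike.IsHomogeneous F.comp B)
    (he : ∀ {h x}, x ∈ F.comp h → x ≠ 0 → x ∈ B → ∃ y ∈ F.comp h, y ≠ 0 ∧ y ∈ A)
    {s : Set K} (hs : Submodule.span ↥(F.oneComponent ⊓ A) s = F.oneSubmodule A) :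
    Submodule.span ↥A s = Subring.toSubmoduleOver A B hAB := by
  refine le_antisymm (Submodule.span_le.mpr fun x hx => hB1 ?_) fun x hx => ?_
  · change x ∈ F.oneSubmodule A
    rw [← hs]
    exact Submodule.subset_span hx
  classical
  rw [← DirectSum.sum_support_decompose F.comp x]
  refine Submodule.sum_mem _ fun h _ => ?_
  obtain ⟨a, ha, y, hy, hxay⟩ := F.exists_eq_mul_of_mem_comp he (SetLike.coe_mem _) (hBh h hx)
  rw [hxay]
  have ha' : a ∈ Submodule.span ↥(F.oneComponent ⊓ A) s := hs ▸ ha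
  clear ha hxay
  induction ha' using Submodule.span_induction with
  | mem a ha => exact mul_comm y a ▸ Submodule.smul_mem _ (⟨y, hy⟩ : ↥A) (Submodule.subset_span ha)
  | zero => simp
  | add a b _ _ iha ihb => simpa [add_mul] using add_mem iha ihb
  | smul c a _ ih =>
    simpa [Subring.smul_def, mul_assoc] using
      Submodule.smul_mem _ (⟨c, (Subring.mem_inf.mp c.2).2⟩ : ↥A) ih

theorem rank_toSubmoduleOver_eq_rank_oneSubmodule (hAB : A ≤ B) (hB1 : F.oneComponent ≤ B)
    (hAh : DirectSum.SetLike.IsHomogeneous F.comp A)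
    (hBh : DirectSum.SetLike.IsHomogeneous F.comp B)
    (hA : ∀ {x y : K}, x ∈ A → x * y = 1 → y ∈ A)
    (he : ∀ {h x}, x ∈ F.comp h → x ≠ 0 → x ∈ B → ∃ y ∈ F.comp h, y ≠ 0 ∧ y ∈ A) :
    Module.rank ↥A ↥(Subring.toSubmoduleOver A B hAB) =
      Module.rank ↥(F.oneComponent ⊓ A) ↥(F.oneSubmodule A) := by
  have : Nontrivial K := ⟨⟨0, 1, F.zero_ne_one⟩⟩
  let := (F.isField_oneComponent_inf hA).toField
  obtain ⟨s, -, hspan, hs⟩ :=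
    exists_linearIndependent ↥(F.oneComponent ⊓ A) (F.oneSubmodule A : Set K)
  rw [Submodule.span_eq] at hspan
  have hs1 (x : s) : (x : K) ∈ F.comp 1 := by
    change (x : K) ∈ F.oneSubmodule A
    rw [← hspan]
    exact Submodule.subset_span x.2
  rw [← F.span_eq_toSubmoduleOver hAB hB1 hBh he hspan, ← hspan, rank_span_set hs,
    rank_span_set (F.linearIndependent_of_oneComponent_inf hAh hA hs1 hs)]

end Descent

theorem inertia_le (G : Subgroup (RingAut K)) : F.inertia G ≤ G := fun _ hσ => hσ.1

theorem mapsTo_oneComponent {G : Subgroup (RingAut K)} (hG : ∀ σ ∈ G, F.IsGradedAut σ) :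
    ∀ σ ∈ G, ∀ x ∈ F.oneComponent, σ x ∈ F.oneComponent :=
  fun σ hσ => hG σ hσ 1

section Galois

variable {G : Subgroup (RingAut K)} (hG : ∀ σ ∈ G, F.IsGradedAut σ)

theorem ker_restrictRingAut_oneComponent :
    (G.restrictRingAut F.oneComponent (F.mapsTo_oneComponent hG)).ker =
      (F.inertia G).subgroupOf G := by
  ext σ
  simp only [MonoidHom.mem_ker, Subgroup.mem_subgroupOf, mem_inertia, σ.2, true_and,
    RingEquiv.ext_iff, Subtype.ext_iff, Subgroup.coe_restrictRingAut_apply, Subtype.forall]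
  rfl

theorem card_range_restrictRingAut_oneComponent [Finite G] :
    Nat.card (G.restrictRingAut F.oneComponent (F.mapsTo_oneComponent hG)).range =
      Nat.card G / Nat.card (F.inertia G) := by
  let r := G.restrictRingAut F.oneComponent (F.mapsTo_oneComponent hG)
  have hker : Nat.card r.ker = Nat.card (F.inertia G) := by
    rw [F.ker_restrictRingAut_oneComponent hG]
    exact Nat.card_congr (Subgroup.subgroupOfEquivOfLe (F.inertia_le G)).toEquiv
  rw [← Subgroup.index_ker, ← hker, ← r.ker.card_mul_index, Nat.mul_div_cancel_left _ Nat.card_pos]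

theorem rank_oneSubmodule_fixedSubring [Finite G] :
    Module.rank ↥(F.oneComponent ⊓ fixedSubring G) ↥(F.oneSubmodule (fixedSubring G)) =
      Nat.card (G.restrictRingAut F.oneComponent (F.mapsTo_oneComponent hG)).range := by
  let := F.isField_oneComponent.toField
  let r := G.restrictRingAut F.oneComponent (F.mapsTo_oneComponent hG)
  have : FaithfulSMul r.range ↥F.oneComponent := ⟨fun h => Subtype.ext (RingEquiv.ext h)⟩
  have : Finite r.range := Finite.of_surjective _ r.rangeRestrict_surjective
  have : Fintype r.range := Fintype.ofFinite _
  have hE (a : ↥F.oneComponent) :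
      a ∈ FixedPoints.subfield r.range ↥F.oneComponent ↔ (a : K) ∈ fixedSubring G := by
    refine ⟨fun ha σ hσ => congrArg Subtype.val (ha ⟨r ⟨σ, hσ⟩, ⟨σ, hσ⟩, rfl⟩), ?_⟩
    rintro ha ⟨_, σ, rfl⟩
    exact Subtype.ext (ha σ σ.2)
  rw [Nat.card_eq_fintype_card, ← FixedPoints.finrank_eq_card r.range ↥F.oneComponent,
    Module.finrank_eq_rank]
  refine (rank_eq_of_equiv_equiv (fun c => ⟨c, Subring.mem_inf.mpr ⟨(c : ↥F.oneComponent).2,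
    (hE c).mp c.2⟩⟩) ⟨⟨fun a => ⟨a, a.2⟩, fun a => ⟨a, a.2⟩, fun _ => rfl, fun _ => rfl⟩,
      fun _ _ => rfl⟩ ⟨fun c d hcd => ?_, fun c => ?_⟩ fun _ _ => rfl).symm
  · exact Subtype.ext (Subtype.ext (congrArg Subtype.val hcd :))
  · obtain ⟨hc1, hcG⟩ := Subring.mem_inf.mp c.2
    exact ⟨⟨⟨c, hc1⟩, (hE _).mpr hcG⟩, rfl⟩

theorem exists_sum_out_smul_mul_ne_zero
    [Fintype (↥G ⧸ (G.restrictRingAut F.oneComponent (F.mapsTo_oneComponent hG)).ker)]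
    {h : H} {x : K} (hx : x ∈ F.comp h) (hx0 : x ≠ 0) :
    ∃ a : ↥F.oneComponent, ∑ q : ↥G ⧸ (G.restrictRingAut F.oneComponent
      (F.mapsTo_oneComponent hG)).ker, q.out • (x * a) ≠ 0 := by
  have : Nontrivial K := ⟨⟨0, 1, F.zero_ne_one⟩⟩
  have := F.isField_oneComponent.isDomain
  let r := G.restrictRingAut F.oneComponent (F.mapsTo_oneComponent hG)
  by_contra! hT
  obtain ⟨u, hu, hxu⟩ := F.inv_mem hx hx0
  -- dividing by `x` turns the vanishing sums into a relation among the characters `G/I ↪ Aut K₁`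
  let d (q : ↥G ⧸ r.ker) : ↥F.oneComponent :=
    ⟨(q.out : RingAut K) x * u, F.mul_mem_comp_one (hG _ q.out.2 h x hx) hu⟩
  have hd : d = 0 := by
    refine RingAut.eq_zero_of_forall_sum_mul_apply_eq_zero
      (QuotientGroup.kerLift_injective r) fun a => Subtype.ext ?_
    have hk (q : ↥G ⧸ r.ker) : (QuotientGroup.kerLift r q a : K) = (q.out : RingAut K) a := by
      conv_lhs => rw [← QuotientGroup.out_eq' q]
      rfl
    have hTu := congrArg (· * u) (hT a)
    simp only [zero_mul, Finset.sum_mul] at hTu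
    rw [ZeroMemClass.coe_zero, ← hTu, AddSubmonoidClass.coe_finsetSum]
    refine Finset.sum_congr rfl fun q _ => ?_
    rw [MulMemClass.coe_mul, hk, Subgroup.smul_def, RingAut.smul_def, map_mul, mul_right_comm]
  have hunit : IsUnit ((1 : ↥G ⧸ r.ker).out • x * u) :=
    ((IsUnit.of_mul_eq_one u hxu).map _).mul (IsUnit.of_mul_eq_one_right x hxu)
  exact hunit.ne_zero (congrArg Subtype.val (congrFun hd 1))

end Galois

theorem exists_ne_zero_mem_fixedSubring {G : Subgroup (RingAut K)} [Finite G]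
    (hG : ∀ σ ∈ G, F.IsGradedAut σ) {h : H} {x : K} (hx : x ∈ F.comp h) (hx0 : x ≠ 0)
    (hxI : x ∈ fixedSubring (F.inertia G)) : ∃ y ∈ F.comp h, y ≠ 0 ∧ y ∈ fixedSubring G := by
  let r := G.restrictRingAut F.oneComponent (F.mapsTo_oneComponent hG)
  have : Fintype (↥G ⧸ r.ker) := Fintype.ofFinite _
  obtain ⟨a, ha⟩ := F.exists_sum_out_smul_mul_ne_zero hG hx hx0
  have hfix : ∀ n ∈ r.ker, n • (x * a) = x * a := by
    intro n hn
    rw [F.ker_restrictRingAut_oneComponent hG, Subgroup.mem_subgroupOf] at hn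
    rw [Subgroup.smul_def, RingAut.smul_def, map_mul, hxI _ hn, hn.2 _ a.2]
  have hxa : x * a ∈ F.comp h := by simpa using F.mul_mem hx a.2
  exact ⟨_, AddSubgroup.sum_mem _ fun q _ => hG _ q.out.2 h _ hxa, ha,
    fun σ hσ => smul_sum_out_smul hfix ⟨σ, hσ⟩⟩

end GradedField

/-- Let `K` be an `H`-graded field, `G` a finite group of graded automorphisms with inertia
subgroup `I`, `F' = K^I` and `L = K^G`.  Then `K₁/L₁` is a finite Galois extension with
Galois group `G/I` (the fixed field of the `G`-action on `K₁` is `L₁` and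
`[K₁:L₁] = #(G/I)`), `F'₁ = K₁`, and the natural map `K₁ ⊗_{L₁} L → F'` is an isomorphism
of graded `L`-algebras: `e_{F'/L} = 1`, `[F':L] = [K₁:L₁]`, and `F'` is generated as a ring
by `K₁` and `L`. -/
theorem GradedField.fixed_inertia_structure {H : Type*} [CommGroup H] [DecidableEq H]
    {K : Type*} [CommRing K] (F : GradedField H K) (G : Subgroup (RingAut K)) [Finite G]
    (hG : ∀ σ ∈ G, F.IsGradedAut σ) :
    -- `G` acts on `K₁`, with fixed field `L₁` and kernel `I`; `[K₁:L₁] = #(G/I)`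
    (∀ σ ∈ G, ∀ x ∈ F.oneComponent, σ x ∈ F.oneComponent) ∧
    (∀ x ∈ F.oneComponent, (∀ σ ∈ G, σ x = x) → x ∈ fixedSubring G) ∧
    Module.rank ↥(F.oneComponent ⊓ fixedSubring G) ↥(F.oneSubmodule (fixedSubring G)) =
      (Nat.card G / Nat.card (F.inertia G) : ℕ) ∧
    -- `F'₁ = K₁`
    F.oneComponent ≤ fixedSubring (F.inertia G) ∧
    -- `e_{F'/L} = 1`
    (∀ h : H, (∃ x ∈ F.comp h, x ≠ 0 ∧ x ∈ fixedSubring (F.inertia G)) ↔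
      ∃ x ∈ F.comp h, x ≠ 0 ∧ x ∈ fixedSubring G) ∧
    -- `[F':L] = [K₁:L₁]`
    Module.rank ↥(fixedSubring G)
        ↥(Subring.toSubmoduleOver (fixedSubring G) (fixedSubring (F.inertia G))
          (fun _ hx σ hσ => hx σ hσ.1)) =
      Module.rank ↥(F.oneComponent ⊓ fixedSubring G) ↥(F.oneSubmodule (fixedSubring G)) ∧
    -- the natural map `K₁ ⊗_{L₁} L → F'` is onto: `F'` is generated by `K₁` and `L`
    ∀ x ∈ fixedSubring (F.inertia G),
      x ∈ Subring.closure ((F.oneComponent : Set K) ∪ (fixedSubring G : Set K)) := by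
  have hI : ∀ σ ∈ F.inertia G, F.IsGradedAut σ := fun σ hσ => hG σ hσ.1
  have hK₁ : F.oneComponent ≤ fixedSubring (F.inertia G) := fun x hx σ hσ => hσ.2 x hx
  have he {h : H} {x : K} (hx : x ∈ F.comp h) (hx0 : x ≠ 0)
      (hxI : x ∈ fixedSubring (F.inertia G)) : ∃ y ∈ F.comp h, y ≠ 0 ∧ y ∈ fixedSubring G :=
    F.exists_ne_zero_mem_fixedSubring hG hx hx0 hxI
  refine ⟨F.mapsTo_oneComponent hG, fun x _ hx => hx, ?_, hK₁, fun h => ⟨?_, ?_⟩, ?_,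
    fun x hx => F.mem_closure_oneComponent_union (F.isHomogeneous_fixedSubring hI) he hx⟩
  · rw [F.rank_oneSubmodule_fixedSubring hG, F.card_range_restrictRingAut_oneComponent hG]
  · rintro ⟨x, hx, hx0, hxI⟩
    exact he hx hx0 hxI
  · rintro ⟨x, hx, hx0, hxG⟩
    exact ⟨x, hx, hx0, fixedSubring_anti (F.inertia_le G) hxG⟩
  · exact F.rank_toSubmoduleOver_eq_rank_oneSubmodule _ hK₁ (F.isHomogeneous_fixedSubring hG)
      (F.isHomogeneous_fixedSubring hI) mem_fixedSubring_of_mul_eq_one he
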